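/- Let X be a symmetric simplicial set. The following are equivalent: (1) for each n ≥ 1, the map 𝓔_T : X_n → lim_T X is a bijection for every spine T of [n]; (2) for each n ≥ 1 there exists a spine T of [n] such that 𝓔_T is a bijection; (3) X is isomorphic to the nerve of a groupoid, regarded as a symmetric set (the symmetric nerve of a groupoid G has n-simplices the functors to G from the indiscrete groupoid on the set [n]). -/

import Mathlib

/-- A symmetric (simplicial) set: a functor `Υᵒᵖ → Set`, where `Υ` has objects
`[n] = {0,…,n}` (encoded as `Fin (n+1)`) and all functions as morphisms.
For `α : [m] → [n]` and `x ∈ X_n`, `act α x` is `x · α ∈ X_m`. -/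
structure SymSet where
  obj : ℕ → Type
  act : ∀ {m n : ℕ}, (Fin (m + 1) → Fin (n + 1)) → obj n → obj m
  act_id : ∀ {n : ℕ} (x : obj n), act id x = x
  act_comp : ∀ {m n k : ℕ} (α : Fin (m + 1) → Fin (n + 1)) (β : Fin (n + 1) → Fin (k + 1))
      (x : obj k), act α (act β x) = act (β ∘ α) x

namespace SymSet

/-- `x_{ij} ∈ X_1`, the action on `x ∈ X_n` of the map `[1] → [n]` with `0 ↦ i`, `1 ↦ j`. -/
def edge (X : SymSet) {n : ℕ} (i j : Fin (n + 1)) (x : X.obj n) : X.obj 1 :=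
  X.act (fun t : Fin 2 => if t = 0 then i else j) x

/-- The domain of an edge, its image under `ι₀ : [0] → [1]`, `0 ↦ 0`. -/
def edgeDom (X : SymSet) (f : X.obj 1) : X.obj 0 :=
  X.act (fun _ : Fin 1 => (0 : Fin 2)) f

/-- The codomain of an edge, its image under `ι₁ : [0] → [1]`, `0 ↦ 1`. -/
def edgeCod (X : SymSet) (f : X.obj 1) : X.obj 0 :=
  X.act (fun _ : Fin 1 => (1 : Fin 2)) f

/-- The identity edge `id_a` on an object `a ∈ X_0`, induced by the unique map `[1] → [0]`. -/
def identityEdge (X : SymSet) (a : X.obj 0) : X.obj 1 :=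
  X.act (fun _ : Fin 2 => (0 : Fin 1)) a

/-- An edge is an identity if it is in the image of `X_0 → X_1`. -/
def IsIdentityEdge (X : SymSet) (f : X.obj 1) : Prop :=
  ∃ a : X.obj 0, f = X.identityEdge a

/-- The tuple of edges `x_{ij}` (for `i < j` an edge `{i,j}` of the spine `T`)
associated to an `n`-simplex `x`. -/
def spineTuple (X : SymSet) {n : ℕ} (T : SimpleGraph (Fin (n + 1))) (x : X.obj n) :
    ∀ i j : Fin (n + 1), i < j → T.Adj i j → X.obj 1 :=
  fun i j _ _ => X.edge i j x

/-- Membership in `lim_T X`: the components have matching endpoints. -/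
def IsSpineLim (X : SymSet) {n : ℕ} (T : SimpleGraph (Fin (n + 1)))
    (e : ∀ i j : Fin (n + 1), i < j → T.Adj i j → X.obj 1) : Prop :=
  ∃ v : Fin (n + 1) → X.obj 0, ∀ (i j : Fin (n + 1)) (hlt : i < j) (h : T.Adj i j),
    X.edgeDom (e i j hlt h) = v i ∧ X.edgeCod (e i j hlt h) = v j

/-- The limit `lim_T X` of the diagram associated to a spine `T`. -/
def SpineLim (X : SymSet) {n : ℕ} (T : SimpleGraph (Fin (n + 1))) : Type :=
  { e : ∀ i j : Fin (n + 1), i < j → T.Adj i j → X.obj 1 // X.IsSpineLim T e }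

lemma spineTuple_isSpineLim (X : SymSet) {n : ℕ} (T : SimpleGraph (Fin (n + 1)))
    (x : X.obj n) : X.IsSpineLim T (X.spineTuple T x) := by
  refine ⟨fun i => X.act (fun _ : Fin 1 => i) x, fun i j hlt h => ⟨?_, ?_⟩⟩
  · show X.act _ (X.act _ x) = _
    rw [X.act_comp]
    show X.act ((fun t : Fin 2 => if t = 0 then i else j) ∘ fun _ : Fin 1 => 0) x
      = X.act (fun _ : Fin 1 => i) x
    congr 1
  · show X.act _ (X.act _ x) = _
    rw [X.act_comp]
    show X.act ((fun t : Fin 2 => if t = 0 then i else j) ∘ fun _ : Fin 1 => 1) x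
      = X.act (fun _ : Fin 1 => j) x
    congr 1

/-- The map `𝓔_T : X_n → lim_T X`. -/
def spineMap (X : SymSet) {n : ℕ} (T : SimpleGraph (Fin (n + 1))) (x : X.obj n) :
    X.SpineLim T :=
  ⟨X.spineTuple T x, X.spineTuple_isSpineLim T x⟩

/-- A symmetric set is *spiny* if `𝓔_T` is injective for every `n ≥ 1` and
every spine `T` of `[n]` (a tree with vertex set `[n]`). -/
def Spiny (X : SymSet) : Prop :=
  ∀ n : ℕ, 1 ≤ n → ∀ T : SimpleGraph (Fin (n + 1)), T.IsTree →
    Function.Injective (X.spineMap T)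

/-- An element `x ∈ X_n` is degenerate if `x = y · σ` for some noninvertible
surjection `σ : [n] → [k]`. -/
def Degenerate (X : SymSet) {n : ℕ} (x : X.obj n) : Prop :=
  ∃ (k : ℕ) (σ : Fin (n + 1) → Fin (k + 1)) (y : X.obj k),
    Function.Surjective σ ∧ ¬ Function.Bijective σ ∧ x = X.act σ y

/-- A symmetric subset (subfunctor) of `X`. -/
structure SymSubset (X : SymSet) where
  carrier : ∀ n : ℕ, Set (X.obj n)
  act_mem : ∀ {m n : ℕ} (α : Fin (m + 1) → Fin (n + 1)) {x : X.obj n},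
    x ∈ carrier n → X.act α x ∈ carrier m

/-- `X` is `n`-skeletal: the smallest symmetric subset of `X` containing all
of its `n`-simplices is all of `X`. -/
def IsSkeletal (X : SymSet) (n : ℕ) : Prop :=
  ∀ Y : SymSubset X, (∀ x : X.obj n, x ∈ Y.carrier n) →
    ∀ (m : ℕ) (x : X.obj m), x ∈ Y.carrier m

/-- `X` has dimension `n`: it is `n`-skeletal but not `k`-skeletal for `k < n`
(for `n ≥ 1` this is equivalent to not being `(n-1)`-skeletal). -/
def HasDim (X : SymSet) (n : ℕ) : Prop :=
  X.IsSkeletal n ∧ ∀ k : ℕ, k < n → ¬ X.IsSkeletal k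

/-- Two objects are related if there is an edge between them (in either direction). -/
def EdgeRel (X : SymSet) (a b : X.obj 0) : Prop :=
  ∃ f : X.obj 1, (X.edgeDom f = a ∧ X.edgeCod f = b) ∨ (X.edgeDom f = b ∧ X.edgeCod f = a)

/-- `X` is connected: it is nonempty and any two objects are joined by a
zig-zag of edges. -/
def Connected (X : SymSet) : Prop :=
  Nonempty (X.obj 0) ∧ ∀ a b : X.obj 0, Relation.ReflTransGen X.EdgeRel a b

/-- `n_a`: the number of nonidentity edges with domain `a`. -/
noncomputable def nEdges (X : SymSet) (a : X.obj 0) : ℕ :=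
  Nat.card { f : X.obj 1 // X.edgeDom f = a ∧ ¬ X.IsIdentityEdge f }

/-- `p(X)`: the maximum of the `n_a` over all objects `a`. -/
noncomputable def pVal (X : SymSet) : ℕ := ⨆ a : X.obj 0, X.nEdges a

/-- A map of symmetric sets (a natural transformation). -/
structure SymMap (X Y : SymSet) where
  app : ∀ n : ℕ, X.obj n → Y.obj n
  naturality : ∀ {m n : ℕ} (α : Fin (m + 1) → Fin (n + 1)) (x : X.obj n),
    app m (X.act α x) = Y.act α (app n x)

/-- A map of symmetric sets is an isomorphism iff it is levelwise bijective. -/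
def SymMap.IsIso {X Y : SymSet} (F : SymMap X Y) : Prop :=
  ∀ n : ℕ, Function.Bijective (F.app n)

/-- `X` and `Y` are isomorphic symmetric sets. -/
def Isomorphic (X Y : SymSet) : Prop := ∃ F : SymMap X Y, F.IsIso

/-- The Bousfield–Segal map `𝓑_m : X_m → X_1^m`, `x ↦ (x_{01}, x_{02}, …, x_{0m})`. -/
def bousfield (X : SymSet) {m : ℕ} (x : X.obj m) : Fin m → X.obj 1 :=
  fun i => X.edge 0 i.succ x

/-- `X` is spiny in degrees below `q`: `𝓔_T` is injective for every spine `T`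
of `[n]` for each `1 ≤ n ≤ q`. -/
def SpinyBelow (X : SymSet) (q : ℕ) : Prop :=
  ∀ n : ℕ, 1 ≤ n → n ≤ q → ∀ T : SimpleGraph (Fin (n + 1)), T.IsTree →
    Function.Injective (X.spineMap T)

/-- `X` is a groupoid: `𝓔_T : X_n → lim_T X` is a bijection for every `n ≥ 1`
and every spine `T` of `[n]`. -/
def IsGroupoid (X : SymSet) : Prop :=
  ∀ n : ℕ, 1 ≤ n → ∀ T : SimpleGraph (Fin (n + 1)), T.IsTree →
    Function.Bijective (X.spineMap T)

/-- `X` is reduced: `X_0` is a singleton. -/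
def Reduced (X : SymSet) : Prop := Nonempty (X.obj 0) ∧ Subsingleton (X.obj 0)

/-- A partial group is a reduced spiny symmetric set. -/
def IsPartialGroup (X : SymSet) : Prop := X.Reduced ∧ X.Spiny

/-- The levelwise product of two symmetric sets. -/
def prod (X Y : SymSet) : SymSet where
  obj n := X.obj n × Y.obj n
  act α p := (X.act α p.1, Y.act α p.2)
  act_id p := by cases p with | mk a b => simp only [X.act_id, Y.act_id]
  act_comp α β p := by cases p with | mk a b => simp only [X.act_comp, Y.act_comp]

end SymSet
open CategoryTheory in
/-- An `n`-simplex of the symmetric nerve of a groupoid `G`: a functor to `G` from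
the indiscrete groupoid on the set `[n]`. -/
structure NerveSimplex (G : Type) [Groupoid G] (n : ℕ) where
  vertex : Fin (n + 1) → G
  hom : ∀ i j : Fin (n + 1), vertex i ⟶ vertex j
  hom_self : ∀ i : Fin (n + 1), hom i i = 𝟙 (vertex i)
  hom_comp : ∀ i j k : Fin (n + 1), hom i j ≫ hom j k = hom i k

open CategoryTheory in
/-- The symmetric nerve of a groupoid. -/
def groupoidNerve (G : Type) [Groupoid G] : SymSet where
  obj n := NerveSimplex G n
  act α x := ⟨fun i => x.vertex (α i), fun i j => x.hom (α i) (α j),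
    fun i => x.hom_self (α i), fun i j k => x.hom_comp (α i) (α j) (α k)⟩
  act_id x := rfl
  act_comp α β x := rfl


/-!
(1) ⇒ (2) is trivial. For (3) ⇒ (1) it suffices to treat a nerve: morphisms given along the
edges of a tree are the differences `g i⁻¹ ≫ g j` of the composites `g i` along the unique paths
from a root, and these differences form a simplex.

For (2) ⇒ (3), every tree on three vertices is a star, so after relabelling the spine `0 — 1 — 2`
has unique fillers. This defines the composite of two composable edges as the third edge of the
filler, and every simplex then satisfies `x_ik = x_ij ≫ x_jk`, which gives units, inverses (the
reversed edges) and cancellation. Associativity and the isomorphism from `X` to the nerve of this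
groupoid on `X_0` both come from one observation: filling the spine with the data `F i⁻¹ ≫ F j`,
for edges `F j` out of a common vertex with `F 0` an identity, gives a simplex whose edges out of
`0` are the `F j`, as one sees by propagating along the spine.
-/

open CategoryTheory SimpleGraph

lemma SimpleGraph.Preconnected.forall_of_adj {V : Type*} {G : SimpleGraph V} (hG : G.Preconnected)
    {P : V → Prop} (hstep : ∀ u v, G.Adj u v → P u → P v) {u : V} (hu : P u) (v : V) :
    P v := by
  induction (reachable_iff_reflTransGen u v).mp (hG u v) with
  | refl => exact hu
  | tail _ hadj ih => exact hstep _ _ hadj ih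

lemma SimpleGraph.Connected.exists_adj {n : ℕ} {T : SimpleGraph (Fin (n + 1))} (hT : T.Connected)
    (hn : 1 ≤ n) (i : Fin (n + 1)) : ∃ j, T.Adj i j :=
  have : Nontrivial (Fin (n + 1)) := Fin.nontrivial_iff_two_le.mpr (by omega)
  hT.preconnected.exists_adj_of_nontrivial i

lemma SimpleGraph.starGraph_le_iff {V : Type*} {G : SimpleGraph V} {r : V} :
    starGraph r ≤ G ↔ ∀ v, v ≠ r → G.Adj r v := by
  refine ⟨fun h v hv => h (starGraph_center_adj hv.symm), fun h a b hab => ?_⟩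
  rcases starGraph_adj.mp hab with ⟨hne, rfl | rfl⟩
  · exact h b hne.symm
  · exact (h a hne).symm

lemma SimpleGraph.IsTree.exists_eq_starGraph {T : SimpleGraph (Fin 3)} (hT : T.IsTree) :
    ∃ c, T = starGraph c := by
  obtain ⟨c, hc⟩ : ∃ c, starGraph c ≤ T := by
    have hadj := hT.connected.exists_adj (by norm_num)
    obtain ⟨b0, h0⟩ := hadj 0
    fin_cases b0
    · exact (h0.ne rfl).elim
    · obtain ⟨b2, h2⟩ := hadj 2
      fin_cases b2
      · exact ⟨0, starGraph_le_iff.2 fun a ha => by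
          fin_cases a; exacts [(ha rfl).elim, h0, h2.symm]⟩
      · exact ⟨1, starGraph_le_iff.2 fun a ha => by
          fin_cases a; exacts [h0.symm, (ha rfl).elim, h2.symm]⟩
      · exact (h2.ne rfl).elim
    · obtain ⟨b1, h1⟩ := hadj 1
      fin_cases b1
      · exact ⟨0, starGraph_le_iff.2 fun a ha => by
          fin_cases a; exacts [(ha rfl).elim, h1.symm, h0]⟩
      · exact (h1.ne rfl).elim
      · exact ⟨2, starGraph_le_iff.2 fun a ha => by
          fin_cases a; exacts [h0.symm, h1.symm, (ha rfl).elim]⟩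
  exact ⟨c, (isTree_iff_maximal_isAcyclic.mp (isTree_starGraph c)).2.eq_of_ge hT.isAcyclic hc⟩

def SimpleGraph.Iso.starGraph {V W : Type*} (σ : V ≃ W) (r : V) :
    starGraph r ≃g starGraph (σ r) where
  toEquiv := σ
  map_rel_iff' := by simp [starGraph_adj]

namespace SymSet

variable {X : SymSet}

def vert (X : SymSet) {n : ℕ} (i : Fin (n + 1)) (x : X.obj n) : X.obj 0 :=
  X.act (fun _ => i) x

def rev (X : SymSet) (f : X.obj 1) : X.obj 1 :=
  X.act (fun t : Fin 2 => if t = 0 then 1 else 0) f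

lemma act_congr {m n : ℕ} {α β : Fin (m + 1) → Fin (n + 1)} (h : ∀ t, α t = β t)
    (x : X.obj n) :
    X.act α x = X.act β x := by
  rw [funext h]

lemma act_eq_self {n : ℕ} {α : Fin (n + 1) → Fin (n + 1)} (h : ∀ t, α t = t) (x : X.obj n) :
    X.act α x = x := by
  rw [act_congr h]
  exact X.act_id x

lemma edge_act {m n : ℕ} (α : Fin (m + 1) → Fin (n + 1)) (x : X.obj n) (i j : Fin (m + 1)) :
    X.edge i j (X.act α x) = X.edge (α i) (α j) x := by
  rw [edge, X.act_comp]
  exact act_congr (fun t => by by_cases h : t = 0 <;> simp [h]) x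

lemma vert_act {m n : ℕ} (α : Fin (m + 1) → Fin (n + 1)) (x : X.obj n) (i : Fin (m + 1)) :
    X.vert i (X.act α x) = X.vert (α i) x :=
  X.act_comp _ _ x

lemma edgeDom_edge {n : ℕ} (i j : Fin (n + 1)) (x : X.obj n) :
    X.edgeDom (X.edge i j x) = X.vert i x :=
  X.act_comp _ _ x

lemma edgeCod_edge {n : ℕ} (i j : Fin (n + 1)) (x : X.obj n) :
    X.edgeCod (X.edge i j x) = X.vert j x :=
  X.act_comp _ _ x

lemma edgeDom_eq_vert (f : X.obj 1) : X.edgeDom f = X.vert 0 f := rfl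

lemma edgeCod_eq_vert (f : X.obj 1) : X.edgeCod f = X.vert 1 f := rfl

lemma edge_zero_one (f : X.obj 1) : X.edge 0 1 f = f :=
  act_eq_self (fun t => by fin_cases t <;> rfl) f

lemma edge_swap {n : ℕ} (i j : Fin (n + 1)) (x : X.obj n) :
    X.edge j i x = X.rev (X.edge i j x) := by
  rw [rev, edge, edge, X.act_comp]
  exact act_congr (fun t => by fin_cases t <;> rfl) x

lemma edge_self {n : ℕ} (i : Fin (n + 1)) (x : X.obj n) :
    X.edge i i x = X.identityEdge (X.vert i x) := by
  rw [identityEdge, vert, X.act_comp]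
  exact act_congr (fun t => by split_ifs <;> rfl) x

lemma vert_zero (a : X.obj 0) : X.vert 0 a = a :=
  act_eq_self (fun t => by fin_cases t; rfl) a

lemma rev_rev (f : X.obj 1) : X.rev (X.rev f) = f := by
  rw [← edge_zero_one f, ← edge_swap, ← edge_swap]

lemma edgeDom_rev (f : X.obj 1) : X.edgeDom (X.rev f) = X.edgeCod f := by
  rw [← edge_zero_one f, ← edge_swap, edgeDom_edge, edgeCod_edge]

lemma edgeCod_rev (f : X.obj 1) : X.edgeCod (X.rev f) = X.edgeDom f := by
  rw [← edge_zero_one f, ← edge_swap, edgeDom_edge, edgeCod_edge]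

lemma identityEdge_eq_edge (a : X.obj 0) : X.identityEdge a = X.edge 0 0 a := by
  rw [edge_self, vert_zero]

lemma edgeDom_identityEdge (a : X.obj 0) : X.edgeDom (X.identityEdge a) = a := by
  rw [identityEdge_eq_edge, edgeDom_edge, vert_zero]

lemma edgeCod_identityEdge (a : X.obj 0) : X.edgeCod (X.identityEdge a) = a := by
  rw [identityEdge_eq_edge, edgeCod_edge, vert_zero]

/-- Orientation-free form of the bijectivity of `𝓔_T`, with the vertices recorded: every family
of edges along `T` with matching endpoints, in which `e j i` is the reversal of `e i j`, comes
from a unique simplex. -/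
def HasUniqueSpineFillers (X : SymSet) {n : ℕ} (T : SimpleGraph (Fin (n + 1))) : Prop :=
  ∀ (v : Fin (n + 1) → X.obj 0) (e : Fin (n + 1) → Fin (n + 1) → X.obj 1),
    (∀ i j, T.Adj i j → X.edgeDom (e i j) = v i ∧ e j i = X.rev (e i j)) →
    ∃! x : X.obj n, (∀ i, X.vert i x = v i) ∧ ∀ i j, T.Adj i j → X.edge i j x = e i j

variable {n : ℕ}

lemma HasUniqueSpineFillers.eq {T : SimpleGraph (Fin (n + 1))} (hT : X.HasUniqueSpineFillers T)
    {x y : X.obj n} (hv : ∀ i, X.vert i x = X.vert i y)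
    (he : ∀ i j, T.Adj i j → X.edge i j x = X.edge i j y) : x = y :=
  (hT (X.vert · y) (X.edge · · y) fun i j _ => ⟨edgeDom_edge i j y, edge_swap i j y⟩).unique
    ⟨hv, he⟩ ⟨fun _ => rfl, fun _ _ _ => rfl⟩

lemma vert_eq_of_edge_eq {T : SimpleGraph (Fin (n + 1))} (hT : T.Connected) (hn : 1 ≤ n)
    {x y : X.obj n} (he : ∀ i j, T.Adj i j → X.edge i j x = X.edge i j y) (i : Fin (n + 1)) :
    X.vert i x = X.vert i y := by
  obtain ⟨j, hij⟩ := hT.exists_adj hn i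
  rw [← edgeDom_edge i j x, ← edgeDom_edge i j y, he i j hij]

lemma edge_eq_of_lt {T : SimpleGraph (Fin (n + 1))} {x : X.obj n}
    {e : Fin (n + 1) → Fin (n + 1) → X.obj 1}
    (hrev : ∀ i j, T.Adj i j → e j i = X.rev (e i j))
    (he : ∀ i j, i < j → T.Adj i j → X.edge i j x = e i j) (i j : Fin (n + 1))
    (hij : T.Adj i j) :
    X.edge i j x = e i j := by
  rcases lt_or_gt_of_ne hij.ne with hlt | hgt
  · exact he i j hlt hij
  · rw [edge_swap, he j i hgt hij.symm, hrev j i hij.symm]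

lemma edge_eq_of_spineMap_eq {T : SimpleGraph (Fin (n + 1))} {x : X.obj n} {t : X.SpineLim T}
    (h : X.spineMap T x = t) (i j : Fin (n + 1)) (hlt : i < j) (hij : T.Adj i j) :
    X.edge i j x = t.1 i j hlt hij := by
  subst h
  rfl

lemma hasUniqueSpineFillers_of_bijective {T : SimpleGraph (Fin (n + 1))} (hT : T.Connected)
    (hn : 1 ≤ n) (hbij : Function.Bijective (X.spineMap T)) : X.HasUniqueSpineFillers T := by
  intro v e he
  obtain ⟨x, hx⟩ := hbij.2 ⟨fun i j _ _ => e i j, v, fun i j _ hij =>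
    ⟨(he i j hij).1, by rw [← edgeDom_rev, ← (he i j hij).2, (he j i hij.symm).1]⟩⟩
  have hxe : ∀ i j, T.Adj i j → X.edge i j x = e i j :=
    edge_eq_of_lt (fun i j hij => (he i j hij).2) (edge_eq_of_spineMap_eq hx)
  refine ⟨x, ⟨fun i => ?_, hxe⟩, fun y hy => hbij.1 (Subtype.ext ?_)⟩
  · obtain ⟨j, hij⟩ := hT.exists_adj hn i
    rw [← edgeDom_edge i j x, hxe i j hij, (he i j hij).1]
  · funext i j _ hij
    exact (hy.2 i j hij).trans (hxe i j hij).symm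

lemma HasUniqueSpineFillers.spineMap_bijective {T : SimpleGraph (Fin (n + 1))}
    (hfill : X.HasUniqueSpineFillers T) (hT : T.Connected) (hn : 1 ≤ n) :
    Function.Bijective (X.spineMap T) := by
  classical
  refine ⟨fun x y hxy => ?_, fun ⟨e, v, hv⟩ => ?_⟩
  · have he : ∀ i j, T.Adj i j → X.edge i j x = X.edge i j y :=
      edge_eq_of_lt (fun i j _ => edge_swap i j y) (edge_eq_of_spineMap_eq hxy)
    exact hfill.eq (vert_eq_of_edge_eq hT hn he) he
  let e' : Fin (n + 1) → Fin (n + 1) → X.obj 1 := fun i j =>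
    if h : i < j ∧ T.Adj i j then e i j h.1 h.2 else X.identityEdge (v i)
  let E : Fin (n + 1) → Fin (n + 1) → X.obj 1 := fun i j =>
    if i < j then e' i j else X.rev (e' j i)
  have hE : ∀ i j, T.Adj i j → X.edgeDom (E i j) = v i ∧ E j i = X.rev (E i j) := by
    intro i j hij
    rcases lt_or_gt_of_ne hij.ne with hlt | hgt
    · simp [E, e', hlt, hij, not_lt_of_gt hlt, (hv i j hlt hij).1]
    · simp [E, e', hgt, hij.symm, not_lt_of_gt hgt, rev_rev, edgeDom_rev, (hv j i hgt hij.symm).2]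
  obtain ⟨x, hx, -⟩ := hfill v E hE
  refine ⟨x, Subtype.ext ?_⟩
  funext i j hlt hij
  show X.edge i j x = _
  simpa [E, e', hlt, hij] using hx.2 i j hij

lemma HasUniqueSpineFillers.of_iso {Y : SymSet} (F : SymMap X Y) (hF : F.IsIso)
    {T : SimpleGraph (Fin (n + 1))} (hY : Y.HasUniqueSpineFillers T) :
    X.HasUniqueSpineFillers T := by
  have hvert : ∀ (i : Fin (n + 1)) x, F.app 0 (X.vert i x) = Y.vert i (F.app n x) :=
    fun _ x => F.naturality _ x
  have hedge : ∀ (i j : Fin (n + 1)) x, F.app 1 (X.edge i j x) = Y.edge i j (F.app n x) :=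
    fun _ _ x => F.naturality _ x
  intro v e he
  obtain ⟨y, hy, hyuniq⟩ := hY (F.app 0 ∘ v) (fun i j => F.app 1 (e i j)) fun i j hij =>
    ⟨by rw [Function.comp_apply, ← (he i j hij).1]; exact (F.naturality _ _).symm,
      by rw [(he i j hij).2]; exact F.naturality _ _⟩
  have hfill : ∀ x,
      ((∀ i, X.vert i x = v i) ∧ ∀ i j, T.Adj i j → X.edge i j x = e i j) ↔
      ((∀ i, Y.vert i (F.app n x) = F.app 0 (v i)) ∧
        ∀ i j, T.Adj i j → Y.edge i j (F.app n x) = F.app 1 (e i j)) := by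
    intro x
    simp only [← hvert, ← hedge, (hF 0).1.eq_iff, (hF 1).1.eq_iff]
  obtain ⟨x, rfl⟩ := (hF n).2 y
  exact ⟨x, (hfill x).2 hy, fun x' hx' => (hF n).1 (hyuniq _ ((hfill x').1 hx'))⟩

lemma HasUniqueSpineFillers.of_graphIso {T T' : SimpleGraph (Fin (n + 1))} (φ : T' ≃g T)
    (hT : X.HasUniqueSpineFillers T) : X.HasUniqueSpineFillers T' := by
  have hact : ∀ x : X.obj n, X.act φ (X.act φ.symm x) = x :=
    fun x => by rw [X.act_comp]; exact act_eq_self (fun t => φ.symm_apply_apply t) x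
  have hfill : ∀ (v : Fin (n + 1) → X.obj 0) (e : Fin (n + 1) → Fin (n + 1) → X.obj 1) x,
      ((∀ i, X.vert i x = v (φ.symm i)) ∧
        ∀ i j, T.Adj i j → X.edge i j x = e (φ.symm i) (φ.symm j)) ↔
      ((∀ i, X.vert i (X.act φ x) = v i) ∧
        ∀ i j, T'.Adj i j → X.edge i j (X.act φ x) = e i j) := by
    intro v e x
    simp only [vert_act, edge_act]
    constructor
    · rintro ⟨hv, he⟩
      exact ⟨fun i => by simpa using hv (φ i),
        fun i j hij => by simpa using he _ _ (φ.map_adj_iff.2 hij)⟩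
    · rintro ⟨hv, he⟩
      exact ⟨fun i => by simpa using hv (φ.symm i),
        fun i j hij => by simpa using he _ _ (φ.symm.map_adj_iff.2 hij)⟩
  intro v e he
  obtain ⟨x, hx, hxuniq⟩ := hT (v ∘ φ.symm) (fun i j => e (φ.symm i) (φ.symm j))
    fun i j hij => he _ _ (φ.symm.map_adj_iff.2 hij)
  refine ⟨X.act φ x, (hfill v e x).1 hx, fun y hy => ?_⟩
  rw [← hact y, hxuniq _ ((hfill v e (X.act φ.symm y)).2 (by rwa [hact y]))]

lemma hasUniqueSpineFillers_zero (T : SimpleGraph (Fin 1)) : X.HasUniqueSpineFillers T := by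
  intro v _ _
  refine ⟨v 0, ⟨fun i => ?_, fun i j hij => (hij.ne (Fin.ext (by omega))).elim⟩, ?_⟩
  · rw [show i = 0 from Fin.ext (by omega), vert_zero]
  · rintro x ⟨hx, -⟩
    rw [← hx 0, vert_zero]

end SymSet

section Nerve

variable {G : Type} [Groupoid G]

def SimpleGraph.Walk.groupoidHom {V : Type*} {T : SimpleGraph V} {w : V → G}
    (E : ∀ a b, T.Adj a b → (w a ⟶ w b)) : ∀ {a b : V}, T.Walk a b → (w a ⟶ w b)
  | _, _, .nil => 𝟙 _
  | _, _, .cons h p => E _ _ h ≫ p.groupoidHom E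

lemma SimpleGraph.Walk.groupoidHom_concat {V : Type*} {T : SimpleGraph V} {w : V → G}
    (E : ∀ a b, T.Adj a b → (w a ⟶ w b)) {a b c : V} (p : T.Walk a b) (h : T.Adj b c) :
    (p.concat h).groupoidHom E = p.groupoidHom E ≫ E b c h := by
  induction p with
  | nil => simp [Walk.concat, groupoidHom]
  | cons h' p ih => simp [Walk.concat_cons, groupoidHom, ih]

/-- `g a` is the composite along the unique path from `r` to `a`. -/
lemma SimpleGraph.IsTree.exists_hom_eq_comp {V : Type*} {T : SimpleGraph V} (hT : T.IsTree)
    (r : V) {w : V → G} (E : ∀ a b, T.Adj a b → (w a ⟶ w b))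
    (hE : ∀ a b (h : T.Adj a b), E b a h.symm = Groupoid.inv (E a b h)) :
    ∃ g : ∀ a, w r ⟶ w a, ∀ a b (h : T.Adj a b), g b = g a ≫ E a b h := by
  choose p hp _ using hT.existsUnique_path r
  refine ⟨fun a => (p a).groupoidHom E, fun a b h => ?_⟩
  by_cases ha : a ∈ (p b).support
  · show (p b).groupoidHom E = (p a).groupoidHom E ≫ E a b h
    rw [hT.isAcyclic.path_concat (hp a) (hp b) h ha, Walk.groupoidHom_concat]
  · have hb : b ∈ (p a).support := by
      by_contra hb
      exact ha (hT.isAcyclic.mem_support_of_ne_mem_support_of_adj_of_isPath (hp b) (hp a) h.symm hb)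
    show (p b).groupoidHom E = (p a).groupoidHom E ≫ E a b h
    rw [hT.isAcyclic.path_concat (hp b) (hp a) h.symm hb, Walk.groupoidHom_concat, hE a b h,
      Category.assoc, Groupoid.inv_comp, Category.comp_id]

lemma NerveSimplex.hom_eq_inv_comp {n : ℕ} (x : NerveSimplex G n) (i j : Fin (n + 1)) :
    x.hom i j = Groupoid.inv (x.hom 0 i) ≫ x.hom 0 j := by
  rw [← x.hom_comp 0 i j, ← Category.assoc, Groupoid.inv_comp, Category.id_comp]

lemma NerveSimplex.ext_of_hom_zero {n : ℕ} {x y : NerveSimplex G n} (hv : x.vertex = y.vertex)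
    (hh : ∀ j, x.hom 0 j ≍ y.hom 0 j) : x = y := by
  revert hv hh
  obtain ⟨xv, xh, xs, xc⟩ := x
  obtain ⟨yv, yh, ys, yc⟩ := y
  rintro rfl hh
  obtain rfl : xh = yh := funext fun i => funext fun j => by
    have hx := NerveSimplex.hom_eq_inv_comp ⟨xv, xh, xs, xc⟩ i j
    have hy := NerveSimplex.hom_eq_inv_comp ⟨xv, yh, ys, yc⟩ i j
    dsimp only at hx hy hh
    rw [hx, hy, eq_of_heq (hh i), eq_of_heq (hh j)]
  rfl

lemma groupoidNerve_eq_of_edge_eq {n : ℕ} {T : SimpleGraph (Fin (n + 1))} (hT : T.Preconnected)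
    {x y : NerveSimplex G n} (hv : x.vertex = y.vertex)
    (he : ∀ i j, T.Adj i j → (groupoidNerve G).edge i j x = (groupoidNerve G).edge i j y) :
    x = y := by
  refine NerveSimplex.ext_of_hom_zero hv fun j => ?_
  revert hv he
  obtain ⟨xv, xh, xs, xc⟩ := x
  obtain ⟨yv, yh, ys, yc⟩ := y
  rintro rfl he
  refine heq_of_eq (hT.forall_of_adj (P := fun j => xh 0 j = yh 0 j) (fun j k hjk hj => ?_)
    (show xh 0 0 = yh 0 0 by rw [xs, ys]) j)
  have hjk : xh j k = yh j k :=
    eq_of_heq (congr_arg_heq (fun z : NerveSimplex G 1 => z.hom 0 1) (he j k hjk))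
  rw [← xc 0 j k, ← yc 0 j k, hj, hjk]

def NerveSimplex.homOf (z : NerveSimplex G 1) {a b : G} (ha : z.vertex 0 = a)
    (hb : z.vertex 1 = b) : a ⟶ b :=
  eqToHom ha.symm ≫ z.hom 0 1 ≫ eqToHom hb

lemma NerveSimplex.homOf_congr {z z' : NerveSimplex G 1} (h : z = z') {a b : G}
    (ha : z.vertex 0 = a) (hb : z.vertex 1 = b) (ha' : z'.vertex 0 = a) (hb' : z'.vertex 1 = b) :
    z.homOf ha hb = z'.homOf ha' hb' := by
  subst h
  rfl

lemma NerveSimplex.homOf_rev (z : NerveSimplex G 1) {a b : G} (ha : z.vertex 0 = a)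
    (hb : z.vertex 1 = b) :
    ((groupoidNerve G).rev z).homOf hb ha = Groupoid.inv (z.homOf ha hb) := by
  subst ha hb
  change eqToHom rfl ≫ z.hom 1 0 ≫ eqToHom rfl =
    Groupoid.inv (eqToHom rfl ≫ z.hom 0 1 ≫ eqToHom rfl)
  rw [z.hom_eq_inv_comp 1 0, z.hom_self]
  simp only [eqToHom_refl, Category.id_comp, Category.comp_id]

lemma groupoidNerve_edge_eq {n : ℕ} (x : NerveSimplex G n) (i j : Fin (n + 1))
    (z : NerveSimplex G 1) (hi : z.vertex 0 = x.vertex i) (hj : z.vertex 1 = x.vertex j)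
    (h : x.hom i j = z.homOf hi hj) : (groupoidNerve G).edge i j x = z := by
  refine NerveSimplex.ext_of_hom_zero (funext fun t => ?_) fun t => ?_
  · fin_cases t
    exacts [hi.symm, hj.symm]
  · fin_cases t
    · show x.hom i i ≍ z.hom 0 0
      rw [x.hom_self, z.hom_self, hi]
    · exact (conj_eqToHom_iff_heq' _ _ _ _).1 h

theorem groupoidNerve_hasUniqueSpineFillers {n : ℕ} {T : SimpleGraph (Fin (n + 1))}
    (hT : T.IsTree) : (groupoidNerve G).HasUniqueSpineFillers T := by
  intro v e he
  set w : Fin (n + 1) → G := fun i => (v i).vertex 0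
  have h0 : ∀ i j, T.Adj i j → (e i j).vertex 0 = w i := fun i j h =>
    congrArg (fun z : NerveSimplex G 0 => z.vertex 0) (he i j h).1
  have h1 : ∀ i j, T.Adj i j → (e i j).vertex 1 = w j := fun i j h =>
    (congrArg (fun z : NerveSimplex G 1 => z.vertex 0) (he i j h).2).symm.trans (h0 j i h.symm)
  let E : ∀ i j, T.Adj i j → (w i ⟶ w j) := fun i j h => (e i j).homOf (h0 i j h) (h1 i j h)
  obtain ⟨g, hg⟩ := hT.exists_hom_eq_comp 0 E fun i j h =>
    (NerveSimplex.homOf_congr (he i j h).2 _ _ _ _).trans (NerveSimplex.homOf_rev _ _ _)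
  have hvert : ∀ y : NerveSimplex G n,
      (∀ i, (groupoidNerve G).vert i y = v i) → y.vertex = w :=
    fun y hy => funext fun i => congrArg (fun z : NerveSimplex G 0 => z.vertex 0) (hy i)
  let S : NerveSimplex G n := ⟨w, fun i j => Groupoid.inv (g i) ≫ g j, by simp, by simp⟩
  have hedge : ∀ i j, T.Adj i j → (groupoidNerve G).edge i j S = e i j := fun i j h =>
    groupoidNerve_edge_eq S i j _ (h0 i j h) (h1 i j h) <| by
      show Groupoid.inv (g i) ≫ g j = E i j h
      rw [hg i j h, ← Category.assoc, Groupoid.inv_comp, Category.id_comp]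
  refine ⟨S, ⟨fun i => ?_, hedge⟩, fun y hy => groupoidNerve_eq_of_edge_eq
    hT.connected.preconnected (hvert y hy.1) fun i j h => (hy.2 i j h).trans (hedge i j h).symm⟩
  refine NerveSimplex.ext_of_hom_zero (funext fun t => ?_) fun t => ?_ <;>
    obtain rfl : t = 0 := Fin.ext (by omega)
  · rfl
  · show Groupoid.inv (g i) ≫ g i ≍ (v i).hom 0 0
    rw [Groupoid.inv_comp, (v i).hom_self]

end Nerve

namespace SymSet

variable {X : SymSet}

section Composition

variable {f g : X.obj 1}

lemma exists_edge_eq_of_edgeCod_eq (hP : X.HasUniqueSpineFillers (starGraph (1 : Fin 3)))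
    (hfg : X.edgeCod f = X.edgeDom g) : ∃ y : X.obj 2, X.edge 0 1 y = f ∧ X.edge 1 2 y = g := by
  obtain ⟨y, ⟨-, hy⟩, -⟩ := hP ![X.edgeDom f, X.edgeDom g, X.edgeCod g]
    ![![f, f, f], ![X.rev f, f, g], ![f, X.rev g, f]] fun i j hij => by
      fin_cases i <;> fin_cases j <;>
        simp_all [starGraph_adj, edgeDom_rev, rev_rev]
  exact ⟨y, hy 0 1 (by simp [starGraph_adj]), hy 1 2 (by simp [starGraph_adj])⟩

lemma eq_of_spine_eq (hP : X.HasUniqueSpineFillers (starGraph (1 : Fin 3))) {y y' : X.obj 2}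
    (h01 : X.edge 0 1 y = X.edge 0 1 y') (h12 : X.edge 1 2 y = X.edge 1 2 y') : y = y' := by
  have h0 : X.vert 0 y = X.vert 0 y' := by simpa only [edgeDom_edge] using congrArg X.edgeDom h01
  have h1 : X.vert 1 y = X.vert 1 y' := by simpa only [edgeDom_edge] using congrArg X.edgeDom h12
  have h2 : X.vert 2 y = X.vert 2 y' := by simpa only [edgeCod_edge] using congrArg X.edgeCod h12
  have h10 : X.edge 1 0 y = X.edge 1 0 y' := by rw [edge_swap, h01, ← edge_swap]
  have h21 : X.edge 2 1 y = X.edge 2 1 y' := by rw [edge_swap, h12, ← edge_swap]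
  refine hP.eq (fun i => ?_) fun i j hij => ?_
  · fin_cases i
    exacts [h0, h1, h2]
  · fin_cases i <;> fin_cases j <;> simp [starGraph_adj] at hij
    exacts [h01, h10, h12, h21]

open Classical in
/-- The third edge of a 2-simplex with edges `f` from `0` to `1` and `g` from `1` to `2`; the junk
value `f` when there is no such simplex. -/
noncomputable def comp (X : SymSet) (f g : X.obj 1) : X.obj 1 :=
  if h : ∃ y : X.obj 2, X.edge 0 1 y = f ∧ X.edge 1 2 y = g then X.edge 0 2 h.choose else f

lemma comp_edge_edge (hP : X.HasUniqueSpineFillers (starGraph (1 : Fin 3))) {n : ℕ}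
    (x : X.obj n) (i j k : Fin (n + 1)) : X.comp (X.edge i j x) (X.edge j k x) = X.edge i k x := by
  set z := X.act ![i, j, k] x
  have hz01 : X.edge 0 1 z = X.edge i j x := by simp [z, edge_act]
  have hz12 : X.edge 1 2 z = X.edge j k x := by simp [z, edge_act]
  have hz02 : X.edge 0 2 z = X.edge i k x := by simp [z, edge_act]
  have h : ∃ y : X.obj 2, X.edge 0 1 y = X.edge i j x ∧ X.edge 1 2 y = X.edge j k x :=
    ⟨z, hz01, hz12⟩
  rw [comp, dif_pos h, eq_of_spine_eq hP (h.choose_spec.1.trans hz01.symm)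
    (h.choose_spec.2.trans hz12.symm), hz02]

lemma edgeDom_comp (hP : X.HasUniqueSpineFillers (starGraph (1 : Fin 3)))
    (hfg : X.edgeCod f = X.edgeDom g) : X.edgeDom (X.comp f g) = X.edgeDom f := by
  obtain ⟨y, rfl, rfl⟩ := exists_edge_eq_of_edgeCod_eq hP hfg
  rw [comp_edge_edge hP, edgeDom_edge, edgeDom_edge]

lemma edgeCod_comp (hP : X.HasUniqueSpineFillers (starGraph (1 : Fin 3)))
    (hfg : X.edgeCod f = X.edgeDom g) : X.edgeCod (X.comp f g) = X.edgeCod g := by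
  obtain ⟨y, rfl, rfl⟩ := exists_edge_eq_of_edgeCod_eq hP hfg
  rw [comp_edge_edge hP, edgeCod_edge, edgeCod_edge]

lemma identityEdge_comp (hP : X.HasUniqueSpineFillers (starGraph (1 : Fin 3))) (f : X.obj 1) :
    X.comp (X.identityEdge (X.edgeDom f)) f = f := by
  simpa only [edge_self, edge_zero_one, edgeDom_eq_vert] using comp_edge_edge hP f 0 0 1

lemma comp_identityEdge (hP : X.HasUniqueSpineFillers (starGraph (1 : Fin 3))) (f : X.obj 1) :
    X.comp f (X.identityEdge (X.edgeCod f)) = f := by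
  simpa only [edge_self, edge_zero_one, edgeCod_eq_vert] using comp_edge_edge hP f 0 1 1

lemma comp_rev_self (hP : X.HasUniqueSpineFillers (starGraph (1 : Fin 3))) (f : X.obj 1) :
    X.comp f (X.rev f) = X.identityEdge (X.edgeDom f) := by
  simpa only [edge_self, edge_swap 0 1, edge_zero_one, edgeDom_eq_vert]
    using comp_edge_edge hP f 0 1 0

lemma rev_comp_self (hP : X.HasUniqueSpineFillers (starGraph (1 : Fin 3))) (f : X.obj 1) :
    X.comp (X.rev f) f = X.identityEdge (X.edgeCod f) := by
  simpa only [edge_self, edge_swap 0 1, edge_zero_one, edgeCod_eq_vert]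
    using comp_edge_edge hP f 1 0 1

lemma rev_comp (hP : X.HasUniqueSpineFillers (starGraph (1 : Fin 3)))
    (hfg : X.edgeCod f = X.edgeDom g) : X.rev (X.comp f g) = X.comp (X.rev g) (X.rev f) := by
  obtain ⟨y, rfl, rfl⟩ := exists_edge_eq_of_edgeCod_eq hP hfg
  rw [comp_edge_edge hP, ← edge_swap, ← edge_swap, ← edge_swap, comp_edge_edge hP]

lemma rev_comp_comp (hP : X.HasUniqueSpineFillers (starGraph (1 : Fin 3)))
    (hfg : X.edgeCod f = X.edgeDom g) : X.comp (X.rev f) (X.comp f g) = g := by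
  obtain ⟨y, rfl, rfl⟩ := exists_edge_eq_of_edgeCod_eq hP hfg
  rw [comp_edge_edge hP, ← edge_swap, comp_edge_edge hP]

lemma comp_comp_rev (hP : X.HasUniqueSpineFillers (starGraph (1 : Fin 3)))
    (hfg : X.edgeCod f = X.edgeDom g) : X.comp (X.comp f g) (X.rev g) = f := by
  obtain ⟨y, rfl, rfl⟩ := exists_edge_eq_of_edgeCod_eq hP hfg
  rw [comp_edge_edge hP, ← edge_swap, comp_edge_edge hP]

lemma comp_rev_comp (hP : X.HasUniqueSpineFillers (starGraph (1 : Fin 3)))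
    (hfg : X.edgeDom f = X.edgeDom g) : X.comp f (X.comp (X.rev f) g) = g := by
  simpa only [rev_rev] using rev_comp_comp hP (f := X.rev f) (by rwa [edgeCod_rev])

end Composition

lemma exists_edge_zero_eq (hP : X.HasUniqueSpineFillers (starGraph (1 : Fin 3))) {n : ℕ}
    {T : SimpleGraph (Fin (n + 1))} (hT : T.Connected) (hfill : X.HasUniqueSpineFillers T)
    {a : X.obj 0} (F : Fin (n + 1) → X.obj 1) (hdom : ∀ j, X.edgeDom (F j) = a)
    (hF0 : F 0 = X.identityEdge a) : ∃ x : X.obj n, ∀ j, X.edge 0 j x = F j := by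
  have hcomp : ∀ i j, X.edgeCod (X.rev (F i)) = X.edgeDom (F j) := fun i j => by
    rw [edgeCod_rev, hdom, hdom]
  obtain ⟨x, ⟨hv, he⟩, -⟩ := hfill (fun i => X.edgeCod (F i))
    (fun i j => X.comp (X.rev (F i)) (F j)) fun i j _ =>
      ⟨by rw [edgeDom_comp hP (hcomp i j), edgeDom_rev],
        by rw [rev_comp hP (hcomp i j), rev_rev]⟩
  refine ⟨x, hT.preconnected.forall_of_adj (fun j k hjk hj => ?_) (u := 0) ?_⟩
  · rw [← comp_edge_edge hP x 0 j k, hj, he j k hjk, comp_rev_comp hP (by rw [hdom, hdom])]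
  · rw [edge_self, hv, hF0, edgeCod_identityEdge]

lemma comp_assoc (hP : X.HasUniqueSpineFillers (starGraph (1 : Fin 3)))
    (h3 : ∃ T : SimpleGraph (Fin 4), T.Connected ∧ X.HasUniqueSpineFillers T)
    {f g h : X.obj 1} (hfg : X.edgeCod f = X.edgeDom g) (hgh : X.edgeCod g = X.edgeDom h) :
    X.comp (X.comp f g) h = X.comp f (X.comp g h) := by
  obtain ⟨T, hT, hfill⟩ := h3
  have hfgh : X.edgeCod f = X.edgeDom (X.comp g h) := by rw [edgeDom_comp hP hgh, hfg]
  obtain ⟨x, hx⟩ := exists_edge_zero_eq hP hT hfill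
    ![X.identityEdge (X.edgeDom f), f, X.comp f g, X.comp f (X.comp g h)]
    (fun j => by
      fin_cases j <;> simp [edgeDom_identityEdge, edgeDom_comp hP hfg, edgeDom_comp hP hfgh])
    rfl
  have x01 : X.edge 0 1 x = f := hx 1
  have x02 : X.edge 0 2 x = X.comp f g := hx 2
  have x03 : X.edge 0 3 x = X.comp f (X.comp g h) := hx 3
  have x12 : X.edge 1 2 x = g := by
    rw [← comp_edge_edge hP x 1 0 2, edge_swap 0 1 x, x01, x02, rev_comp_comp hP hfg]
  have x13 : X.edge 1 3 x = X.comp g h := by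
    rw [← comp_edge_edge hP x 1 0 3, edge_swap 0 1 x, x01, x03, rev_comp_comp hP hfgh]
  have x23 : X.edge 2 3 x = h := by
    rw [← comp_edge_edge hP x 2 1 3, edge_swap 1 2 x, x12, x13, rev_comp_comp hP hgh]
  calc X.comp (X.comp f g) h = X.comp (X.edge 0 2 x) (X.edge 2 3 x) := by rw [x02, x23]
    _ = X.edge 0 3 x := comp_edge_edge hP x 0 2 3
    _ = X.comp f (X.comp g h) := x03

/-- A type synonym for `X_0`, carrying the groupoid whose morphisms `a ⟶ b` are the edges from
`a` to `b`. -/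
def EdgeGroupoid (X : SymSet) (_hP : X.HasUniqueSpineFillers (starGraph (1 : Fin 3)))
    (_hassoc : ∀ f g h : X.obj 1, X.edgeCod f = X.edgeDom g → X.edgeCod g = X.edgeDom h →
      X.comp (X.comp f g) h = X.comp f (X.comp g h)) : Type :=
  X.obj 0

variable {hP : X.HasUniqueSpineFillers (starGraph (1 : Fin 3))}
  {hassoc : ∀ f g h : X.obj 1, X.edgeCod f = X.edgeDom g → X.edgeCod g = X.edgeDom h →
    X.comp (X.comp f g) h = X.comp f (X.comp g h)}

noncomputable instance : Groupoid (X.EdgeGroupoid hP hassoc) where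
  Hom a b := {f : X.obj 1 // X.edgeDom f = a ∧ X.edgeCod f = b}
  id a := ⟨X.identityEdge a, edgeDom_identityEdge a, edgeCod_identityEdge a⟩
  comp f g := ⟨X.comp f.1 g.1, by rw [edgeDom_comp hP (f.2.2.trans g.2.1.symm), f.2.1],
    by rw [edgeCod_comp hP (f.2.2.trans g.2.1.symm), g.2.2]⟩
  id_comp := by
    rintro _ _ ⟨f, rfl, rfl⟩
    exact Subtype.ext (identityEdge_comp hP f)
  comp_id := by
    rintro _ _ ⟨f, rfl, rfl⟩
    exact Subtype.ext (comp_identityEdge hP f)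
  assoc f g h := Subtype.ext (hassoc _ _ _ (f.2.2.trans g.2.1.symm) (g.2.2.trans h.2.1.symm))
  inv f := ⟨X.rev f.1, by rw [edgeDom_rev, f.2.2], by rw [edgeCod_rev, f.2.1]⟩
  inv_comp := by
    rintro _ _ ⟨f, rfl, rfl⟩
    exact Subtype.ext (rev_comp_self hP f)
  comp_inv := by
    rintro _ _ ⟨f, rfl, rfl⟩
    exact Subtype.ext (comp_rev_self hP f)

lemma EdgeGroupoid.nerveSimplex_ext {n : ℕ} {x y : NerveSimplex (X.EdgeGroupoid hP hassoc) n}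
    (hv : x.vertex = y.vertex) (he : ∀ i j, (x.hom i j).1 = (y.hom i j).1) : x = y := by
  revert hv he
  obtain ⟨xv, xh, -, -⟩ := x
  obtain ⟨yv, yh, -, -⟩ := y
  rintro rfl he
  obtain rfl : xh = yh := funext fun i => funext fun j => Subtype.ext (he i j)
  rfl

variable (hP hassoc) in
noncomputable def toEdgeGroupoidNerve : SymMap X (groupoidNerve (X.EdgeGroupoid hP hassoc)) where
  app _ x := ⟨(X.vert · x),
    fun i j => ⟨X.edge i j x, edgeDom_edge i j x, edgeCod_edge i j x⟩,
    fun i => Subtype.ext (edge_self i x), fun i j k => Subtype.ext (comp_edge_edge hP x i j k)⟩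
  naturality α x := EdgeGroupoid.nerveSimplex_ext (funext fun i => vert_act α x i)
    fun i j => edge_act α x i j

theorem toEdgeGroupoidNerve_isIso
    (hfill : ∀ n, ∃ T : SimpleGraph (Fin (n + 1)), T.Connected ∧ X.HasUniqueSpineFillers T) :
    (X.toEdgeGroupoidNerve hP hassoc).IsIso := by
  intro n
  obtain ⟨T, hT, hT'⟩ := hfill n
  refine ⟨fun x y hxy => hT'.eq (x := x) (y := y)
    (fun i => congrFun (congrArg NerveSimplex.vertex hxy) i)
    fun i j _ => congrArg (fun S : NerveSimplex (X.EdgeGroupoid hP hassoc) n => (S.hom i j).1) hxy,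
    fun S => ?_⟩
  obtain ⟨x, hx⟩ := exists_edge_zero_eq hP hT hT' (fun j => (S.hom 0 j).1)
    (fun j => (S.hom 0 j).2.1) (by rw [S.hom_self]; rfl)
  have hedge : ∀ i j, X.edge i j x = (S.hom i j).1 := by
    intro i j
    rw [← comp_edge_edge hP x i 0 j, edge_swap 0 i x, hx, hx, S.hom_eq_inv_comp i j]
    rfl
  refine ⟨x, EdgeGroupoid.nerveSimplex_ext (funext fun i => ?_) hedge⟩
  show X.vert i x = S.vertex i
  rw [← (S.hom i i).2.1, ← hedge, edgeDom_edge]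

lemma HasUniqueSpineFillers.starGraph_one {T : SimpleGraph (Fin 3)} (hT : T.IsTree)
    (h : X.HasUniqueSpineFillers T) : X.HasUniqueSpineFillers (starGraph (1 : Fin 3)) := by
  obtain ⟨c, rfl⟩ := hT.exists_eq_starGraph
  have φ := Iso.starGraph (Equiv.swap (1 : Fin 3) c) 1
  rw [Equiv.swap_apply_left] at φ
  exact h.of_graphIso φ

theorem exists_isomorphic_groupoidNerve
    (h : ∀ n, ∃ T : SimpleGraph (Fin (n + 1)), T.IsTree ∧ X.HasUniqueSpineFillers T) :
    ∃ (G : Type) (_ : Groupoid G), X.Isomorphic (groupoidNerve G) := by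
  obtain ⟨T, hT, hfill⟩ := h 2
  have hP := hfill.starGraph_one hT
  have hconn : ∀ n, ∃ T : SimpleGraph (Fin (n + 1)), T.Connected ∧ X.HasUniqueSpineFillers T :=
    fun n => (h n).imp fun _ hT => ⟨hT.1.connected, hT.2⟩
  have hassoc : ∀ f g k : X.obj 1, X.edgeCod f = X.edgeDom g → X.edgeCod g = X.edgeDom k →
      X.comp (X.comp f g) k = X.comp f (X.comp g k) :=
    fun _ _ _ => comp_assoc hP (hconn 3)
  exact ⟨_, inferInstance, X.toEdgeGroupoidNerve hP hassoc, toEdgeGroupoidNerve_isIso hconn⟩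

end SymSet

open SymSet in
/-- the following are equivalent: (1) `𝓔_T : X_n → lim_T X` is a
bijection for every `n ≥ 1` and every spine `T` of `[n]`; (2) for each `n ≥ 1`
there is some spine `T` of `[n]` with `𝓔_T` bijective; (3) `X` is isomorphic to
the symmetric nerve of a groupoid. -/
theorem stmt1 (X : SymSet) :
    List.TFAE [
      ∀ n : ℕ, 1 ≤ n → ∀ T : SimpleGraph (Fin (n + 1)), T.IsTree →
        Function.Bijective (X.spineMap T),
      ∀ n : ℕ, 1 ≤ n → ∃ T : SimpleGraph (Fin (n + 1)), T.IsTree ∧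
        Function.Bijective (X.spineMap T),
      ∃ (G : Type) (_ : CategoryTheory.Groupoid G),
        SymSet.Isomorphic X (groupoidNerve G)] := by
  tfae_have 1 → 2 := fun h n hn =>
    ⟨starGraph 0, isTree_starGraph 0, h n hn _ (isTree_starGraph 0)⟩
  tfae_have 2 → 3 := by
    refine fun h => X.exists_isomorphic_groupoidNerve fun n => ?_
    rcases Nat.eq_zero_or_pos n with rfl | hn
    · exact ⟨starGraph 0, isTree_starGraph 0, hasUniqueSpineFillers_zero _⟩
    · obtain ⟨T, hT, hbij⟩ := h n hn
      exact ⟨T, hT, hasUniqueSpineFillers_of_bijective hT.connected hn hbij⟩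
  tfae_have 3 → 1 := by
    rintro ⟨G, _, F, hF⟩ n hn T hT
    exact ((groupoidNerve_hasUniqueSpineFillers hT).of_iso F hF).spineMap_bijective hT.connected hn
  tfae_finish
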